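/- For b₋ > 0, b₊ ≥ b₋, λ ≥ 0 and complex s with Re s > 1/2, one has ((λ+b₊)² - b₋²)^{-s} = (λ+b₁)^{-s}(λ+b₂)^{-s} where b₁ = b₊+b₋, b₂ = b₊-b₋; moreover (2b₋)^{1/2-s} √π / Γ(s) · ∫_0^∞ e^{-(λ+b₊)t} I_{s-1/2}(b₋ t) t^{s-1/2} dt = ((λ+b₁)(λ+b₂))^{-s}, where I_ν is the modified Bessel function of the first kind. -/

import Mathlib

/-!
Expanding `I_ν(bt) t^ν` in its power series and integrating term by term against `e^{-at}`
turns each term into a Gamma integral, `Γ(2n+2ν+1) / a^{2n+2ν+1}`. Legendre's duplication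
formula splits this into `Γ(n+ν+1/2) Γ(n+ν+1)`, and the second factor cancels the Gamma function
in the Bessel coefficient. What remains is `(2b)^ν a^{-2ν-1} / √π` times the binomial series
`∑ Γ(ν+1/2+n)/n! · (b/a)^{2n} = Γ(ν+1/2) (1 - b²/a²)^{-(ν+1/2)}`. The interchange of sum and
integral is justified by the ratio test for the integrals of the norms, which works exactly
when `b < a`.

In the boundary case `λ + b₊ = b₋` the integrand is not integrable: otherwise its integral
would bound the transforms at all `a > b`, which blow up like `(a² - b²)^{-Re s}` as `a ↓ b`.
Both sides of the identity are then `0` in Lean (`∫` of a non-integrable function and `0 ^ (-s)`).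
-/

open MeasureTheory Complex

/-- The modified Bessel function of the first kind,
I_ν(x) = Σ_n (x/2)^{2n+ν} / (n! Γ(ν+n+1)), for x > 0 (principal powers). -/
noncomputable def besselI (ν : ℂ) (x : ℝ) : ℂ :=
  ∑' n : ℕ, ((x / 2 : ℝ) : ℂ) ^ (2 * (n : ℂ) + ν) /
    ((Nat.factorial n : ℂ) * Complex.Gamma (ν + n + 1))

open Set Filter Topology
open scoped Nat

lemma Gamma_add_nat_div_factorial_eq_mul_choose {s : ℂ} (hs : ∀ k : ℕ, s ≠ -k) (n : ℕ) :
    Gamma (s + n) / n ! = Gamma s * Ring.choose (s + n - 1) n := by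
  have hfac : (n ! : ℂ) ≠ 0 := by exact_mod_cast n.factorial_ne_zero
  rw [← Ring.multichoose_eq, div_eq_iff hfac, mul_assoc, mul_comm _ (n ! : ℂ), ← nsmul_eq_mul,
    Ring.factorial_nsmul_multichoose_eq_ascPochhammer, Polynomial.ascPochhammer_smeval_eq_eval,
    ← Gamma_add_nat_div_Gamma_eq s hs, mul_div_cancel₀ _ (Gamma_ne_zero hs)]

theorem hasSum_Gamma_add_div_factorial_mul_pow {s x : ℂ} (hs : ∀ k : ℕ, s ≠ -k) (hx : ‖x‖ < 1) :
    HasSum (fun n : ℕ => Gamma (s + n) / n ! * x ^ n) (Gamma s * (1 - x) ^ (-s)) := by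
  have hball : x ∈ Metric.eball (0 : ℂ) 1 := by
    rw [← ENNReal.ofReal_one, Metric.eball_ofReal]; simpa using hx
  have := ((one_div_one_sub_cpow_hasFPowerSeriesOnBall_zero s).hasSum hball).mul_left (Gamma s)
  simpa [FormalMultilinearSeries.ofScalars_apply_eq, Gamma_add_nat_div_factorial_eq_mul_choose hs,
    cpow_neg, mul_assoc, mul_comm (x ^ _)] using this

lemma ofReal_cpow_of_pos {r : ℝ} (hr : 0 < r) (w : ℂ) :
    (r : ℂ) ^ w = exp (Real.log r * w) := by
  rw [cpow_def_of_ne_zero (ofReal_ne_zero.mpr hr.ne'), ofReal_log hr.le]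

lemma integrableOn_cpow_mul_exp_neg_mul_Ioi {w : ℂ} (hw : 0 < w.re) {r : ℝ} (hr : 0 < r) :
    IntegrableOn (fun t : ℝ => (t : ℂ) ^ (w - 1) * exp (-(r * t))) (Ioi 0) := by
  refine Integrable.mono' (g := fun t : ℝ => t ^ (w.re - 1) * Real.exp (-(r * t)))
    ?_ (by fun_prop) ?_
  · have := integrableOn_rpow_mul_exp_neg_mul_rpow (s := w.re - 1) (by linarith) zero_lt_one hr
    simp_rw [Real.rpow_one, neg_mul] at this
    exact this
  · filter_upwards [ae_restrict_mem measurableSet_Ioi] with t (ht : 0 < t)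
    simp [norm_cpow_eq_rpow_re_of_pos ht, Complex.norm_exp]

lemma integral_norm_cpow_mul_exp_neg_mul_Ioi {w : ℂ} (hw : 0 < w.re) {r : ℝ} (hr : 0 < r) :
    ∫ t in Ioi (0 : ℝ), ‖(t : ℂ) ^ (w - 1) * exp (-(r * t))‖ =
      (1 / r) ^ w.re * Real.Gamma w.re := by
  rw [← Real.integral_rpow_mul_exp_neg_mul_Ioi hw hr]
  refine setIntegral_congr_fun measurableSet_Ioi fun t (ht : 0 < t) => ?_
  simp [norm_cpow_eq_rpow_re_of_pos ht, Complex.norm_exp]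

lemma summable_of_le_mul_of_tendsto_lt_one {f q : ℕ → ℝ} {L : ℝ} (hf : ∀ n, 0 ≤ f n)
    (hfq : ∀ n, f (n + 1) ≤ q n * f n) (hq : Tendsto q atTop (𝓝 L)) (hL : L < 1) :
    Summable f := by
  refine summable_of_ratio_norm_eventually_le (r := (L + 1) / 2) (by linarith) ?_
  filter_upwards [hq.eventually_le_const (by linarith : L < (L + 1) / 2)] with n hn
  rw [Real.norm_of_nonneg (hf _), Real.norm_of_nonneg (hf _)]
  exact (hfq n).trans (mul_le_mul_of_nonneg_right hn (hf n))

noncomputable def besselICoeff (ν : ℂ) (b : ℝ) (n : ℕ) : ℂ :=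
  ((b / 2 : ℝ) : ℂ) ^ (2 * (n : ℂ) + ν) / (n ! * Gamma (ν + n + 1))

section BesselCoeff

variable {ν : ℂ} {b : ℝ} {n : ℕ}

lemma besselICoeff_mul {t : ℝ} (hb : 0 ≤ b) (ht : 0 ≤ t) :
    besselICoeff ν (b * t) n = besselICoeff ν b n * (t : ℂ) ^ (2 * (n : ℂ) + ν) := by
  rw [besselICoeff, besselICoeff, show b * t / 2 = b / 2 * t by ring, ofReal_mul,
    mul_cpow_ofReal_nonneg (by positivity) ht]
  ring

lemma besselICoeff_succ (hb : b ≠ 0) (hν : ν + n + 1 ≠ 0) :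
    besselICoeff ν b (n + 1) =
      besselICoeff ν b n * (((b / 2 : ℝ) : ℂ) ^ 2 / ((n + 1) * (ν + n + 1))) := by
  have hb2 : ((b / 2 : ℝ) : ℂ) ≠ 0 := by simpa using hb
  rw [besselICoeff, besselICoeff, Nat.factorial_succ,
    show 2 * ((n + 1 : ℕ) : ℂ) + ν = 2 * n + ν + 2 by push_cast; ring, cpow_add _ _ hb2, cpow_two,
    show ν + ((n + 1 : ℕ) : ℂ) + 1 = ν + n + 1 + 1 by push_cast; ring, Gamma_add_one _ hν]
  push_cast
  field_simp

lemma exp_mul_besselI_mul_cpow_eq_tsum {a t : ℝ} (hb : 0 ≤ b) (ht : 0 < t) :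
    exp (-(a : ℂ) * t) * besselI ν (b * t) * (t : ℂ) ^ ν =
      ∑' n : ℕ, besselICoeff ν b n *
        ((t : ℂ) ^ ((2 * (n : ℂ) + 2 * ν + 1) - 1) * exp (-(a * t))) := by
  have ht0 : (t : ℂ) ≠ 0 := ofReal_ne_zero.mpr ht.ne'
  rw [besselI, ← tsum_mul_left, ← tsum_mul_right]
  refine tsum_congr fun n => ?_
  have hpow : (t : ℂ) ^ (2 * (n : ℂ) + ν) * (t : ℂ) ^ ν =
      (t : ℂ) ^ (2 * (n : ℂ) + 2 * ν + 1 - 1) := by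
    rw [← cpow_add _ _ ht0]
    ring_nf
  rw [← besselICoeff, besselICoeff_mul hb ht.le, neg_mul, ← hpow]
  ring

lemma besselICoeff_mul_Gamma {a : ℝ} (ha : 0 < a) (hb : 0 < b) (hν : -1 < ν.re) :
    besselICoeff ν b n * ((1 / (a : ℂ)) ^ (2 * (n : ℂ) + 2 * ν + 1) * Gamma (2 * n + 2 * ν + 1)) =
      ((2 * b : ℝ) : ℂ) ^ ν * (1 / (a : ℂ)) ^ (2 * ν + 1) / (Real.sqrt Real.pi : ℂ) *
        (Gamma (ν + 1 / 2 + n) / n ! * (((b / a) ^ 2 : ℝ) : ℂ) ^ n) := by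
  have hΓ : Gamma (ν + n + 1) ≠ 0 := Gamma_ne_zero_of_re_pos
    (by simp only [add_re, natCast_re, one_re]; linarith)
  have hdup : Gamma (ν + 1 / 2 + n) * Gamma (ν + n + 1) =
      Gamma (2 * n + 2 * ν + 1) * (2 : ℂ) ^ (1 - 2 * (ν + 1 / 2 + n)) *
        (Real.sqrt Real.pi : ℂ) := by
    rw [show ν + n + 1 = ν + 1 / 2 + n + 1 / 2 by ring, Gamma_mul_Gamma_add_half]
    ring_nf
  have hpow : ((b / 2 : ℝ) : ℂ) ^ (2 * (n : ℂ) + ν) * (1 / (a : ℂ)) ^ (2 * (n : ℂ) + 2 * ν + 1) =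
      ((2 * b : ℝ) : ℂ) ^ ν * (1 / (a : ℂ)) ^ (2 * ν + 1) * (((b / a) ^ 2 : ℝ) : ℂ) ^ n *
        (2 : ℂ) ^ (1 - 2 * (ν + 1 / 2 + n)) := by
    rw [show (1 / (a : ℂ)) = ((a⁻¹ : ℝ) : ℂ) by push_cast; ring,
      show (2 : ℂ) = ((2 : ℝ) : ℂ) by norm_num, ← cpow_natCast]
    rw [ofReal_cpow_of_pos (by positivity), ofReal_cpow_of_pos (by positivity),
      ofReal_cpow_of_pos (by positivity), ofReal_cpow_of_pos (by positivity),
      ofReal_cpow_of_pos (by positivity), ofReal_cpow_of_pos two_pos]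
    simp only [← Complex.exp_add]
    rw [Real.log_div hb.ne' two_ne_zero, Real.log_mul two_ne_zero hb.ne', Real.log_inv,
      Real.log_pow, Real.log_div hb.ne' ha.ne']
    push_cast
    ring_nf
  rw [besselICoeff, div_mul_eq_mul_div, ← mul_assoc, hpow]
  generalize Gamma (ν + 1 / 2 + n) = Γz at hdup ⊢
  generalize Gamma (ν + n + 1) = Γ₁ at hdup hΓ ⊢
  generalize Gamma (2 * n + 2 * ν + 1) = Γw at hdup ⊢
  generalize (2 : ℂ) ^ (1 - 2 * (ν + 1 / 2 + n)) = e at hdup ⊢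
  generalize (((b / a) ^ 2 : ℝ) : ℂ) ^ n = xn
  field_simp
  linear_combination -((2 * b : ℝ) : ℂ) ^ ν * (1 / (a : ℂ)) ^ (2 * ν + 1) * xn / n ! * hdup

lemma norm_besselICoeff_succ_le (hb : b ≠ 0) (hν : -1 < ν.re) :
    ‖besselICoeff ν b (n + 1)‖ ≤
      ‖besselICoeff ν b n‖ * ((b / 2) ^ 2 / ((n + 1) * (ν.re + n + 1))) := by
  have hre : ν.re + n + 1 ≤ ‖ν + n + 1‖ := by simpa using re_le_norm (ν + n + 1)
  have hre0 : 0 < ν.re + n + 1 := by linarith [(n.cast_nonneg : (0 : ℝ) ≤ n)]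
  have hν0 : ν + n + 1 ≠ 0 := norm_pos_iff.mp (hre0.trans_le hre)
  rw [besselICoeff_succ hb hν0, norm_mul, norm_div, norm_mul, norm_pow, Complex.norm_real,
    Real.norm_eq_abs, sq_abs, show ‖(n : ℂ) + 1‖ = n + 1 by norm_cast]
  gcongr

lemma summable_norm_besselICoeff_mul_Gamma {a : ℝ} (hb : 0 < b) (hba : b < a)
    (hν : -1 / 2 < ν.re) :
    Summable fun n : ℕ => ‖besselICoeff ν b n‖ *
      ((1 / a) ^ (2 * n + 2 * ν.re + 1) * Real.Gamma (2 * n + 2 * ν.re + 1)) := by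
  have ha : 0 < a := hb.trans hba
  set σ := ν.re
  have hpos (n : ℕ) : 0 < 2 * (n : ℝ) + 2 * σ + 1 := by
    linarith [(n.cast_nonneg : (0 : ℝ) ≤ n)]
  refine summable_of_le_mul_of_tendsto_lt_one
    (q := fun n : ℕ => (b / a) ^ 2 * ((σ + 1 / 2 + n) / (1 + n))) (L := (b / a) ^ 2)
    (fun n => by have := Real.Gamma_pos_of_pos (hpos n); positivity) (fun n => ?_) ?_ ?_
  · set x : ℝ := 2 * n + 2 * σ + 1
    have hx : 0 < x := hpos n
    have hΓ : Real.Gamma (x + 2) = (x + 1) * x * Real.Gamma x := by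
      rw [show x + 2 = x + 1 + 1 by ring, Real.Gamma_add_one (by positivity),
        Real.Gamma_add_one hx.ne', mul_assoc]
    calc ‖besselICoeff ν b (n + 1)‖ * ((1 / a) ^ (2 * ((n + 1 : ℕ) : ℝ) + 2 * σ + 1) *
          Real.Gamma (2 * ((n + 1 : ℕ) : ℝ) + 2 * σ + 1))
        = ‖besselICoeff ν b (n + 1)‖ *
            ((1 / a) ^ x * (1 / a) ^ 2 * ((x + 1) * x * Real.Gamma x)) := by
          rw [show 2 * ((n + 1 : ℕ) : ℝ) + 2 * σ + 1 = x + 2 by push_cast; ring,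
            Real.rpow_add (by positivity), Real.rpow_two, hΓ]
      _ ≤ ‖besselICoeff ν b n‖ * ((b / 2) ^ 2 / ((n + 1) * (σ + n + 1))) *
          ((1 / a) ^ x * (1 / a) ^ 2 * ((x + 1) * x * Real.Gamma x)) := by
          have := Real.Gamma_pos_of_pos hx
          gcongr
          exact norm_besselICoeff_succ_le hb.ne' (by linarith)
      _ = (b / a) ^ 2 * ((σ + 1 / 2 + n) / (1 + n)) *
          (‖besselICoeff ν b n‖ * ((1 / a) ^ x * Real.Gamma x)) := by
          have : 0 < σ + n + 1 := by linarith
          field_simp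
          ring
  · simpa using (tendsto_add_mul_div_add_mul_atTop_nhds (σ + 1 / 2) 1 1 one_ne_zero).const_mul
      ((b / a) ^ 2)
  · rw [div_pow]
    exact (div_lt_one (by positivity)).mpr (pow_lt_pow_left₀ hba hb.le two_ne_zero)

end BesselCoeff

lemma integral_exp_mul_besselI_mul_cpow_eq_tsum {a b : ℝ} (hb : 0 < b) (hba : b < a) {ν : ℂ}
    (hν : -1 / 2 < ν.re) :
    ∫ t in Ioi (0 : ℝ), exp (-(a : ℂ) * t) * besselI ν (b * t) * (t : ℂ) ^ ν =
      ∑' n : ℕ, besselICoeff ν b n *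
        ((1 / (a : ℂ)) ^ (2 * (n : ℂ) + 2 * ν + 1) * Gamma (2 * n + 2 * ν + 1)) := by
  have ha : 0 < a := hb.trans hba
  have hw (n : ℕ) : 0 < (2 * (n : ℂ) + 2 * ν + 1).re := by
    simp only [add_re, mul_re, re_ofNat, im_ofNat, natCast_re, zero_mul, sub_zero, one_re]
    linarith [(n.cast_nonneg : (0 : ℝ) ≤ n)]
  set F : ℕ → ℝ → ℂ := fun n t => besselICoeff ν b n *
    ((t : ℂ) ^ ((2 * (n : ℂ) + 2 * ν + 1) - 1) * exp (-(a * t)))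
  have hF_int (n : ℕ) : IntegrableOn (F n) (Ioi 0) :=
    (integrableOn_cpow_mul_exp_neg_mul_Ioi (hw n) ha).const_mul _
  have hF_sum : Summable fun n => ∫ t in Ioi (0 : ℝ), ‖F n t‖ := by
    refine (summable_norm_besselICoeff_mul_Gamma hb hba hν).congr fun n => ?_
    simp only [F, norm_mul (besselICoeff ν b n), integral_const_mul,
      integral_norm_cpow_mul_exp_neg_mul_Ioi (hw n) ha]
    simp
  calc ∫ t in Ioi (0 : ℝ), exp (-(a : ℂ) * t) * besselI ν (b * t) * (t : ℂ) ^ ν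
      = ∫ t in Ioi (0 : ℝ), ∑' n, F n t :=
        setIntegral_congr_fun measurableSet_Ioi fun t ht =>
          exp_mul_besselI_mul_cpow_eq_tsum hb.le ht
    _ = ∑' n, ∫ t in Ioi (0 : ℝ), F n t :=
        (integral_tsum_of_summable_integral_norm hF_int hF_sum).symm
    _ = _ := tsum_congr fun n => by
        rw [integral_const_mul, integral_cpow_mul_exp_neg_mul_Ioi (hw n) ha]

lemma one_div_cpow_mul_one_sub_cpow {a b : ℝ} (ha : 0 < a) (hba : |b| < a) (s : ℂ) :
    (1 / (a : ℂ)) ^ (2 * s) * (1 - (((b / a) ^ 2 : ℝ) : ℂ)) ^ (-s) =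
      ((a ^ 2 - b ^ 2 : ℝ) : ℂ) ^ (-s) := by
  have hab : 0 < a ^ 2 - b ^ 2 := by nlinarith [sq_abs b, abs_nonneg b]
  have h1 : 1 - (b / a) ^ 2 = (a ^ 2 - b ^ 2) / a ^ 2 := by field_simp
  rw [show 1 / (a : ℂ) = ((a⁻¹ : ℝ) : ℂ) by push_cast; ring,
    show 1 - (((b / a) ^ 2 : ℝ) : ℂ) = ((1 - (b / a) ^ 2 : ℝ) : ℂ) by push_cast; ring,
    ofReal_cpow_of_pos (inv_pos.mpr ha),
    ofReal_cpow_of_pos (by rw [h1]; positivity), ofReal_cpow_of_pos hab, ← Complex.exp_add, h1,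
    Real.log_div hab.ne' (by positivity), Real.log_inv, Real.log_pow]
  push_cast
  ring_nf

theorem integral_exp_mul_besselI_mul_cpow {a b : ℝ} (hb : 0 < b) (hba : b < a) {ν : ℂ}
    (hν : -1 / 2 < ν.re) :
    ∫ t in Ioi (0 : ℝ), exp (-(a : ℂ) * t) * besselI ν (b * t) * (t : ℂ) ^ ν =
      ((2 * b : ℝ) : ℂ) ^ ν * Gamma (ν + 1 / 2) / (Real.sqrt Real.pi : ℂ) *
        ((a ^ 2 - b ^ 2 : ℝ) : ℂ) ^ (-(ν + 1 / 2)) := by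
  have ha : 0 < a := hb.trans hba
  set x : ℂ := (((b / a) ^ 2 : ℝ) : ℂ)
  have hx : ‖x‖ < 1 := by
    rw [Complex.norm_real, Real.norm_of_nonneg (by positivity), div_pow]
    exact (div_lt_one (by positivity)).mpr (pow_lt_pow_left₀ hba hb.le two_ne_zero)
  have hs : ∀ k : ℕ, ν + 1 / 2 ≠ -k := by
    intro k h
    have h_re := congrArg re h
    simp only [add_re, div_ofNat_re, one_re, neg_re, natCast_re] at h_re
    linarith [(k.cast_nonneg : (0 : ℝ) ≤ k)]
  have hpow := one_div_cpow_mul_one_sub_cpow ha (by rwa [abs_of_pos hb]) (ν + 1 / 2)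
  rw [show 2 * (ν + 1 / 2) = 2 * ν + 1 by ring] at hpow
  calc ∫ t in Ioi (0 : ℝ), exp (-(a : ℂ) * t) * besselI ν (b * t) * (t : ℂ) ^ ν
      = ∑' n : ℕ, ((2 * b : ℝ) : ℂ) ^ ν * (1 / (a : ℂ)) ^ (2 * ν + 1) / (Real.sqrt Real.pi : ℂ) *
          (Gamma (ν + 1 / 2 + n) / n ! * x ^ n) := by
        rw [integral_exp_mul_besselI_mul_cpow_eq_tsum hb hba hν]
        exact tsum_congr fun n => besselICoeff_mul_Gamma ha hb (by linarith)
    _ = ((2 * b : ℝ) : ℂ) ^ ν * (1 / (a : ℂ)) ^ (2 * ν + 1) / (Real.sqrt Real.pi : ℂ) *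
          (Gamma (ν + 1 / 2) * (1 - x) ^ (-(ν + 1 / 2))) := by
        rw [tsum_mul_left, (hasSum_Gamma_add_div_factorial_mul_pow hs hx).tsum_eq]
    _ = _ := by
        rw [← hpow]
        ring

lemma norm_setIntegral_exp_neg_mul_le {f : ℝ → ℂ} (hf : IntegrableOn f (Ioi 0)) {l : ℝ}
    (hl : 0 ≤ l) :
    ‖∫ t in Ioi (0 : ℝ), exp (-(l : ℂ) * t) * f t‖ ≤ ∫ t in Ioi (0 : ℝ), ‖f t‖ := by
  have hexp : ∀ t ∈ Ioi (0 : ℝ), ‖exp (-(l : ℂ) * t)‖ ≤ 1 := fun t (ht : 0 < t) => by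
    rw [Complex.norm_exp, Real.exp_le_one_iff]
    simp only [neg_mul, neg_re, mul_re, ofReal_re, ofReal_im, mul_zero, sub_zero]
    nlinarith
  have hfl : IntegrableOn (fun t : ℝ => exp (-(l : ℂ) * t) * f t) (Ioi 0) :=
    hf.bdd_mul (c := 1) (by fun_prop) ((ae_restrict_mem measurableSet_Ioi).mono hexp)
  refine (norm_integral_le_integral_norm _).trans <|
    setIntegral_mono_on hfl.norm hf.norm measurableSet_Ioi fun t ht => ?_
  rw [norm_mul]
  exact mul_le_of_le_one_left (norm_nonneg _) (hexp t ht)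

theorem not_integrableOn_exp_mul_besselI_mul_cpow {b : ℝ} (hb : 0 < b) {ν : ℂ}
    (hν : -1 / 2 < ν.re) :
    ¬ IntegrableOn (fun t : ℝ => exp (-(b : ℂ) * t) * besselI ν (b * t) * (t : ℂ) ^ ν)
      (Ioi 0) := by
  intro hf
  set f := fun t : ℝ => exp (-(b : ℂ) * t) * besselI ν (b * t) * (t : ℂ) ^ ν
  set K : ℂ := ((2 * b : ℝ) : ℂ) ^ ν * Gamma (ν + 1 / 2) / (Real.sqrt Real.pi : ℂ)
  have hK : K ≠ 0 := by
    have hΓ : Gamma (ν + 1 / 2) ≠ 0 := Gamma_ne_zero_of_re_pos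
      (by simp only [add_re, div_ofNat_re, one_re]; linarith)
    have h2b : ((2 * b : ℝ) : ℂ) ^ ν ≠ 0 := by
      rw [Ne, cpow_eq_zero_iff]; simp [hb.ne']
    exact div_ne_zero (mul_ne_zero h2b hΓ) (ofReal_ne_zero.mpr (Real.sqrt_pos.mpr Real.pi_pos).ne')
  set κ := ν.re + 1 / 2
  have hκ : 0 < κ := by simp only [κ]; linarith
  have hbound (l : ℝ) (hl : 0 < l) :
      ‖K‖ * ((b + l) ^ 2 - b ^ 2) ^ (-κ) ≤ ∫ t in Ioi 0, ‖f t‖ := by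
    have hsplit (t : ℝ) : exp (-((b + l : ℝ) : ℂ) * t) * besselI ν (b * t) * (t : ℂ) ^ ν =
        exp (-(l : ℂ) * t) * f t := by
      simp only [f, ← mul_assoc, ← Complex.exp_add]
      push_cast
      ring_nf
    have hval := integral_exp_mul_besselI_mul_cpow hb (by linarith : b < b + l) hν
    rw [funext hsplit] at hval
    calc ‖K‖ * ((b + l) ^ 2 - b ^ 2) ^ (-κ)
        = ‖∫ t in Ioi (0 : ℝ), exp (-(l : ℂ) * t) * f t‖ := by
          rw [hval, norm_mul, norm_cpow_eq_rpow_re_of_pos (by nlinarith)]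
          congr 2
          simp [κ]
      _ ≤ ∫ t in Ioi 0, ‖f t‖ := norm_setIntegral_exp_neg_mul_le hf hl.le
  have hlim : Tendsto (fun l : ℝ => (b + l) ^ 2 - b ^ 2) (𝓝[>] 0) (𝓝[>] 0) := by
    refine tendsto_nhdsWithin_iff.mpr ⟨?_, ?_⟩
    · exact tendsto_nhdsWithin_of_tendsto_nhds
        ((by fun_prop : Continuous fun l : ℝ => (b + l) ^ 2 - b ^ 2).tendsto' 0 0 (by ring))
    · filter_upwards [self_mem_nhdsWithin] with l (hl : 0 < l)
      show 0 < (b + l) ^ 2 - b ^ 2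
      nlinarith
  have htend : Tendsto (fun l : ℝ => ‖K‖ * ((b + l) ^ 2 - b ^ 2) ^ (-κ)) (𝓝[>] 0) atTop :=
    ((tendsto_rpow_neg_nhdsGT_zero (neg_neg_of_pos hκ)).comp hlim).const_mul_atTop
      (norm_pos_iff.mpr hK)
  obtain ⟨l, hl, hl0⟩ := ((htend.eventually_gt_atTop _).and self_mem_nhdsWithin).exists
  exact (hbound l hl0).not_gt hl

/-- For b₋ > 0, b₊ ≥ b₋, λ ≥ 0 and s ∈ ℂ with Re s > 1/2, writing
b₁ = b₊+b₋ and b₂ = b₊-b₋: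
((λ+b₊)² - b₋²)^{-s} = (λ+b₁)^{-s}(λ+b₂)^{-s}, and
(2b₋)^{1/2-s} √π/Γ(s) · ∫_0^∞ e^{-(λ+b₊)t} I_{s-1/2}(b₋t) t^{s-1/2} dt
  = ((λ+b₁)(λ+b₂))^{-s}. -/
theorem bessel_representation_of_product_power
    (bp bm lam : ℝ) (hbm : 0 < bm) (hbp : bm ≤ bp) (hlam : 0 ≤ lam)
    (s : ℂ) (hs : 1 / 2 < s.re) :
    ((((lam + bp) ^ 2 - bm ^ 2 : ℝ) : ℂ) ^ (-s) =
        ((lam + (bp + bm) : ℝ) : ℂ) ^ (-s) * ((lam + (bp - bm) : ℝ) : ℂ) ^ (-s)) ∧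
      ((2 * bm : ℝ) : ℂ) ^ ((1 : ℂ) / 2 - s) * (Real.sqrt Real.pi : ℂ) /
            Complex.Gamma s *
          (∫ t in Set.Ioi (0 : ℝ),
            Complex.exp (-((lam + bp : ℝ) : ℂ) * t) * besselI (s - 1 / 2) (bm * t) *
              (t : ℂ) ^ (s - 1 / 2)) =
        (((lam + (bp + bm)) * (lam + (bp - bm)) : ℝ) : ℂ) ^ (-s) := by
  have hprod : (lam + bp) ^ 2 - bm ^ 2 = (lam + (bp + bm)) * (lam + (bp - bm)) := by ring
  refine ⟨by
    rw [hprod, ofReal_mul]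
    exact mul_cpow_ofReal_nonneg (by linarith) (by linarith) _, ?_⟩
  rw [← hprod]
  have hν : -1 / 2 < (s - 1 / 2).re := by simp only [sub_re, div_ofNat_re, one_re]; linarith
  rcases (show bm ≤ lam + bp by linarith).lt_or_eq with hlt | heq
  · have h2bm : ((2 * bm : ℝ) : ℂ) ^ ((1 : ℂ) / 2 - s) * ((2 * bm : ℝ) : ℂ) ^ (s - 1 / 2) = 1 := by
      rw [← cpow_add _ _ (ofReal_ne_zero.mpr (by positivity)),
        show (1 : ℂ) / 2 - s + (s - 1 / 2) = 0 by ring, cpow_zero]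
    have hΓ : Gamma s ≠ 0 := Gamma_ne_zero_of_re_pos (by linarith)
    rw [integral_exp_mul_besselI_mul_cpow hbm hlt hν, sub_add_cancel]
    generalize ((2 * bm : ℝ) : ℂ) ^ ((1 : ℂ) / 2 - s) = u at h2bm ⊢
    generalize ((2 * bm : ℝ) : ℂ) ^ (s - 1 / 2) = v at h2bm ⊢
    field_simp
    linear_combination (((lam + bp) ^ 2 - bm ^ 2 : ℝ) : ℂ) ^ (-s) * h2bm
  · rw [← heq, integral_undef (not_integrableOn_exp_mul_besselI_mul_cpow hbm hν), sub_self,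
      ofReal_zero, zero_cpow (neg_ne_zero.mpr (ne_zero_of_re_pos (by linarith))), mul_zero]
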